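/- arXiv:1603.07329 — 6 statements merged into one kernel-verified Lean document; each statement's English description precedes it below -/
import Mathlib

section
/- Let δ > 0, let a < b be real numbers, and let U be a differentiable function on (a,b) such that ξ ↦ U'(ξ)/√(1 + U'(ξ)²) is differentiable with derivative U(ξ), and such that (1/2)·U(ξ)² + 1/√(1 + U'(ξ)²) = 1 + δ for all ξ ∈ (a,b). Then b − a < √(2/δ). -/
/-!
With `F := U' / √(1 + U'²)` we have `|F| < 1` and `F' = U`. The first integral gives
`U² ≥ 2δ + F²`, so `U` never vanishes and has constant sign. Writing `s := √(2δ)`,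
the function `arsinh (F / s)` then has derivative `U / √(s² + F²)` of absolute value at least `1`,
while it stays strictly between `± arsinh (1 / s)`. Hence
`b - a ≤ 2 arsinh (1 / s) < 2 / s = √(2 / δ)`.
-/

open Set Filter Topology Real

lemma sub_le_of_forall_sub_le_of_mem_Ioo {a b L : ℝ} (hab : a < b)
    (h : ∀ x ∈ Ioo a b, ∀ y ∈ Ioo a b, x < y → y - x ≤ L) : b - a ≤ L := by
  have hmid : a < (a + b) / 2 ∧ (a + b) / 2 < b := ⟨by linarith, by linarith⟩
  have hlim : Tendsto (fun p : ℝ × ℝ => p.2 - p.1) (𝓝[>] a ×ˢ 𝓝[<] b) (𝓝 (b - a)) :=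
    (tendsto_snd.mono_right nhdsWithin_le_nhds).sub (tendsto_fst.mono_right nhdsWithin_le_nhds)
  refine le_of_tendsto hlim ?_
  filter_upwards [prod_mem_prod (Ioo_mem_nhdsGT hmid.1) (Ioo_mem_nhdsLT hmid.2)] with p hp
  exact h p.1 ⟨hp.1.1, hp.1.2.trans hmid.2⟩ p.2 ⟨hmid.1.trans hp.2.1, hp.2.2⟩ (hp.1.2.trans hp.2.1)

lemma sub_le_two_mul_of_abs_le_of_one_le_deriv {a b M : ℝ} {h h' : ℝ → ℝ} (hab : a < b)
    (hh : ∀ x ∈ Ioo a b, HasDerivAt h (h' x) x) (hh' : ∀ x ∈ Ioo a b, 1 ≤ h' x)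
    (hM : ∀ x ∈ Ioo a b, |h x| ≤ M) : b - a ≤ 2 * M := by
  have hmono : MonotoneOn (fun x => h x - x) (Ioo a b) := by
    refine monotoneOn_of_hasDerivWithinAt_nonneg (f' := fun x => h' x - 1) (convex_Ioo a b)
      (fun x hx => ((hh x hx).sub (hasDerivAt_id x)).continuousAt.continuousWithinAt)
      (fun x hx => ?_) (fun x hx => ?_) <;> rw [interior_Ioo] at hx
    · exact ((hh x hx).sub (hasDerivAt_id x)).hasDerivWithinAt
    · exact sub_nonneg.2 (hh' x hx)
  refine sub_le_of_forall_sub_le_of_mem_Ioo hab fun x hx y hy hxy => ?_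
  linarith [hmono hx hy hxy.le, (abs_le.1 (hM x hx)).1, (abs_le.1 (hM y hy)).2]

lemma IsPreconnected.forall_pos_or_forall_neg {α : Type*} [TopologicalSpace α] {S : Set α}
    (hS : IsPreconnected S) {f : α → ℝ} (hf : ContinuousOn f S) (hf0 : ∀ x ∈ S, f x ≠ 0) :
    (∀ x ∈ S, 0 < f x) ∨ (∀ x ∈ S, f x < 0) := by
  rcases hS.eq_or_eq_neg_of_sq_eq hf hf.abs (fun x _ => by simp [sq_abs])
    (fun hx => abs_ne_zero.2 (hf0 _ hx)) with h | h
  · exact .inl fun x hx => (h hx).symm ▸ abs_pos.2 (hf0 x hx)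
  · refine .inr fun x hx => ?_
    rw [h hx, Pi.neg_apply, neg_lt_zero]
    exact abs_pos.2 (hf0 x hx)

lemma Real.arsinh_lt_self {x : ℝ} (hx : 0 < x) : arsinh x < x := by
  simpa [arsinh_sinh] using arsinh_strictMono (self_lt_sinh_iff.2 hx)

lemma Real.abs_arsinh_div_lt {f s : ℝ} (hs : 0 < s) (hf : |f| < 1) :
    |arsinh (f / s)| < arsinh (1 / s) := by
  rw [abs_lt, ← arsinh_neg, arsinh_lt_arsinh, arsinh_lt_arsinh, ← neg_div]
  obtain ⟨hl, hr⟩ := abs_lt.1 hf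
  exact ⟨div_lt_div_of_pos_right hl hs, div_lt_div_of_pos_right hr hs⟩

lemma Real.two_div_sqrt_two_mul (δ : ℝ) : 2 / √(2 * δ) = √(2 / δ) := by
  rw [sqrt_mul zero_le_two, sqrt_div zero_le_two]
  rcases eq_or_ne (√δ) 0 with h | h
  · simp [h]
  · have h2 : √2 ≠ 0 := by positivity
    field_simp
    rw [sq_sqrt zero_le_two]

lemma abs_div_sqrt_one_add_sq_lt_one (p : ℝ) : |p / √(1 + p ^ 2)| < 1 := by
  have hpos : 0 < √(1 + p ^ 2) := sqrt_pos.2 (by positivity)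
  rw [abs_div, abs_of_pos hpos, div_lt_one hpos, lt_sqrt (abs_nonneg p), sq_abs]
  linarith

lemma two_mul_add_sq_le_sq_of_first_integral {u p δ : ℝ}
    (h : 1 / 2 * u ^ 2 + 1 / √(1 + p ^ 2) = 1 + δ) :
    2 * δ + (p / √(1 + p ^ 2)) ^ 2 ≤ u ^ 2 := by
  set r := 1 / √(1 + p ^ 2) with hr
  have hsq : (p / √(1 + p ^ 2)) ^ 2 = 1 - r ^ 2 := by
    have : (0 : ℝ) < 1 + p ^ 2 := by positivity
    rw [hr, div_pow, div_pow, sq_sqrt this.le]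
    field_simp
    ring
  rw [hsq]
  nlinarith [sq_nonneg (1 - r)]

lemma one_le_inv_sqrt_one_add_div_sq_mul {s f u : ℝ} (hs : 0 < s) (hu : 0 < u)
    (h : s ^ 2 + f ^ 2 ≤ u ^ 2) : 1 ≤ (√(1 + (f / s) ^ 2))⁻¹ * (u / s) := by
  have hsqrt : √(1 + (f / s) ^ 2) ≤ u / s := by
    refine sqrt_le_iff.2 ⟨by positivity, ?_⟩
    have : (u / s) ^ 2 - (1 + (f / s) ^ 2) = (u ^ 2 - s ^ 2 - f ^ 2) / s ^ 2 := by
      field_simp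
      ring
    rw [← sub_nonneg, this]
    exact div_nonneg (by linarith) (by positivity)
  rw [inv_mul_eq_div, one_le_div (by positivity)]
  exact hsqrt

/-- Theorem 1 (length bound): a solution of the non-dimensional capillarity equation
with first-integral constant `c = 1 + δ`, `δ > 0`, on `(a,b)` forces `b - a < √(2/δ)`. -/
theorem stmt_4 (δ : ℝ) (hδ : 0 < δ) (a b : ℝ) (hab : a < b)
    (U U' : ℝ → ℝ)
    (hU : ∀ ξ ∈ Set.Ioo a b, HasDerivAt U (U' ξ) ξ)
    (hf : ∀ ξ ∈ Set.Ioo a b,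
      HasDerivAt (fun ξ => U' ξ / Real.sqrt (1 + (U' ξ) ^ 2)) (U ξ) ξ)
    (hint : ∀ ξ ∈ Set.Ioo a b,
      (1 / 2) * (U ξ) ^ 2 + 1 / Real.sqrt (1 + (U' ξ) ^ 2) = 1 + δ) :
    b - a < Real.sqrt (2 / δ) := by
  set F : ℝ → ℝ := fun ξ => U' ξ / √(1 + U' ξ ^ 2)
  set s := √(2 * δ)
  have hs : 0 < s := sqrt_pos.2 (by positivity)
  have hlower : ∀ ξ ∈ Ioo a b, s ^ 2 + F ξ ^ 2 ≤ U ξ ^ 2 := fun ξ hξ => by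
    rw [sq_sqrt (by positivity)]
    exact two_mul_add_sq_le_sq_of_first_integral (hint ξ hξ)
  have hsign : (∀ ξ ∈ Ioo a b, 0 < U ξ) ∨ (∀ ξ ∈ Ioo a b, U ξ < 0) :=
    isPreconnected_Ioo.forall_pos_or_forall_neg
      (fun ξ hξ => (hU ξ hξ).continuousAt.continuousWithinAt)
      (fun ξ hξ hU0 => by nlinarith [hlower ξ hξ, sq_nonneg (F ξ)])
  have hG : ∀ ξ ∈ Ioo a b, HasDerivAt (fun t => arsinh (F t / s))
      ((√(1 + (F ξ / s) ^ 2))⁻¹ * (U ξ / s)) ξ :=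
    fun ξ hξ => ((hf ξ hξ).div_const s).arsinh
  have hGbound : ∀ ξ ∈ Ioo a b, |arsinh (F ξ / s)| ≤ arsinh (1 / s) :=
    fun ξ _ => (abs_arsinh_div_lt hs (abs_div_sqrt_one_add_sq_lt_one (U' ξ))).le
  have hlen : b - a ≤ 2 * arsinh (1 / s) := by
    rcases hsign with hpos | hneg
    · exact sub_le_two_mul_of_abs_le_of_one_le_deriv hab hG
        (fun ξ hξ => one_le_inv_sqrt_one_add_div_sq_mul hs (hpos ξ hξ) (hlower ξ hξ)) hGbound
    · refine sub_le_two_mul_of_abs_le_of_one_le_deriv hab (fun ξ hξ => (hG ξ hξ).neg)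
        (fun ξ hξ => ?_) (fun ξ hξ => (abs_neg _).trans_le (hGbound ξ hξ))
      simpa only [neg_div, mul_neg] using one_le_inv_sqrt_one_add_div_sq_mul hs
        (neg_pos.2 (hneg ξ hξ)) ((neg_sq (U ξ)).symm ▸ hlower ξ hξ)
  calc b - a ≤ 2 * arsinh (1 / s) := hlen
    _ < 2 * (1 / s) := by gcongr; exact arsinh_lt_self (by positivity)
    _ = √(2 / δ) := by rw [mul_one_div, two_div_sqrt_two_mul]
end

section
/- For every s₀ ∈ (−1, 0), the function t ↦ −t / (√(1 − t²)·√(t − s₀)) is interval-integrable on (s₀, 0), and the integral ∫_{s₀}^{0} −t / (√(1 − t²)·√(t − s₀)) dt is strictly positive. -/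
/-- Formula (15): for `s₀ ∈ (−1, 0)` the function `t ↦ −t/(√(1−t²)·√(t−s₀))` is
interval-integrable on `(s₀, 0)` and its integral is strictly positive. -/
theorem stmt_12 (s0 : ℝ) (hs0 : s0 ∈ Set.Ioo (-1 : ℝ) 0) :
    IntervalIntegrable (fun t => -t / (Real.sqrt (1 - t ^ 2) * Real.sqrt (t - s0)))
      MeasureTheory.volume s0 0 ∧
    0 < ∫ t in s0..0, -t / (Real.sqrt (1 - t ^ 2) * Real.sqrt (t - s0)) := by
  obtain ⟨hs1, hs2⟩ := hs0
  have hC : 0 < Real.sqrt (1 - s0 ^ 2) := by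
    apply Real.sqrt_pos.2
    nlinarith
  set C : ℝ := (Real.sqrt (1 - s0 ^ 2))⁻¹ with hCdef
  have hCpos : 0 < C := inv_pos.2 hC
  have hg0 : IntervalIntegrable (fun x : ℝ => x ^ (-(1/2) : ℝ))
      MeasureTheory.volume 0 (-s0) := intervalIntegral.intervalIntegrable_rpow' (by norm_num)
  have hg1 : IntervalIntegrable (fun x : ℝ => (x - s0) ^ (-(1/2) : ℝ))
      MeasureTheory.volume s0 0 := by
    have := hg0.comp_sub_right s0
    simpa using this
  have hg : IntervalIntegrable (fun x : ℝ => C * (x - s0) ^ (-(1/2) : ℝ))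
      MeasureTheory.volume s0 0 := hg1.const_mul C
  have hmeas : MeasureTheory.AEStronglyMeasurable
      (fun t => -t / (Real.sqrt (1 - t ^ 2) * Real.sqrt (t - s0)))
      (MeasureTheory.volume.restrict (Set.uIoc s0 0)) := by
    apply Measurable.aestronglyMeasurable
    fun_prop
  have hInt : IntervalIntegrable (fun t => -t / (Real.sqrt (1 - t ^ 2) * Real.sqrt (t - s0)))
      MeasureTheory.volume s0 0 := by
    apply hg.mono_fun hmeas
    have huIoc : Set.uIoc s0 0 = Set.Ioc s0 0 := Set.uIoc_of_le hs2.le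
    filter_upwards [MeasureTheory.ae_restrict_mem measurableSet_uIoc] with t ht
    rw [huIoc] at ht
    obtain ⟨ht1, ht2⟩ := ht
    have h1t : 0 < 1 - t ^ 2 := by nlinarith
    have hsq : 0 < Real.sqrt (1 - t ^ 2) := Real.sqrt_pos.2 h1t
    have hts : 0 < t - s0 := by linarith
    have hsq2 : 0 < Real.sqrt (t - s0) := Real.sqrt_pos.2 hts
    have hrpow : (t - s0) ^ (-(1/2) : ℝ) = (Real.sqrt (t - s0))⁻¹ := by
      rw [Real.rpow_neg hts.le, Real.sqrt_eq_rpow]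
    have hmono : Real.sqrt (1 - s0 ^ 2) ≤ Real.sqrt (1 - t ^ 2) := by
      apply Real.sqrt_le_sqrt
      nlinarith
    have hlhs : 0 ≤ -t / (Real.sqrt (1 - t ^ 2) * Real.sqrt (t - s0)) :=
      div_nonneg (by linarith) (by positivity)
    have hrhs : 0 ≤ C * (t - s0) ^ (-(1/2) : ℝ) := by
      rw [hrpow]; positivity
    rw [Real.norm_eq_abs, Real.norm_eq_abs, abs_of_nonneg hlhs, abs_of_nonneg hrhs, hrpow]
    have key : -t / Real.sqrt (1 - t ^ 2) ≤ C := by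
      rw [hCdef, inv_eq_one_div]
      exact div_le_div₀ (by norm_num) (by linarith) hC hmono
    calc -t / (Real.sqrt (1 - t ^ 2) * Real.sqrt (t - s0))
        = (-t / Real.sqrt (1 - t ^ 2)) / Real.sqrt (t - s0) := by
          rw [div_div]
      _ ≤ C / Real.sqrt (t - s0) :=
          by gcongr
      _ = C * (Real.sqrt (t - s0))⁻¹ := by rw [div_eq_mul_inv]
  refine ⟨hInt, ?_⟩
  apply intervalIntegral.intervalIntegral_pos_of_pos_on hInt _ hs2
  intro t ht
  obtain ⟨ht1, ht2⟩ := ht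
  have h1t : 0 < 1 - t ^ 2 := by nlinarith
  have hts : 0 < t - s0 := by linarith
  have := Real.sqrt_pos.2 h1t
  have := Real.sqrt_pos.2 hts
  apply div_pos (by linarith) (by positivity)
end

section
/- The function F(s₀) := 2·∫_{s₀}^{0} √(t − s₀) / (1 − t²)^{3/2} dt is strictly monotone decreasing on the interval (−1, 0). -/
open Set intervalIntegral

noncomputable def Ifun (s : ℝ) : ℝ :=
  ∫ x in (0:ℝ)..1, Real.sqrt (1 - x) / (Real.sqrt (1 - s ^ 2 * x ^ 2)) ^ 3

lemma Ifun_contOn {s : ℝ} (hs : s ∈ Ioo (-1:ℝ) 0) :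
    ContinuousOn (fun x : ℝ => Real.sqrt (1 - x) / (Real.sqrt (1 - s ^ 2 * x ^ 2)) ^ 3)
      (Icc (0:ℝ) 1) := by
  apply ContinuousOn.div
  · fun_prop
  · fun_prop
  · intro x hx
    have hs2 : s ^ 2 < 1 := by nlinarith [hs.1, hs.2]
    have hx2 : x ^ 2 ≤ 1 := by nlinarith [hx.1, hx.2]
    have : 0 < 1 - s ^ 2 * x ^ 2 := by nlinarith [sq_nonneg s, sq_nonneg x]
    positivity

lemma Ifun_integrable {s : ℝ} (hs : s ∈ Ioo (-1:ℝ) 0) :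
    IntervalIntegrable (fun x : ℝ => Real.sqrt (1 - x) / (Real.sqrt (1 - s ^ 2 * x ^ 2)) ^ 3)
      MeasureTheory.volume 0 1 := by
  apply ContinuousOn.intervalIntegrable
  simpa [Set.uIcc_of_le (zero_le_one)] using Ifun_contOn hs

lemma key (s : ℝ) (hs : s ∈ Ioo (-1:ℝ) 0) :
    (∫ t in s..0, Real.sqrt (t - s) / (Real.sqrt (1 - t ^ 2)) ^ 3)
      = (-s) * Real.sqrt (-s) * Ifun s := by
  have hs0 : s ≠ 0 := ne_of_lt hs.2
  have hns : (0:ℝ) ≤ -s := by linarith [hs.2]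
  have h1 : (∫ t in s..0, Real.sqrt (t - s) / (Real.sqrt (1 - t ^ 2)) ^ 3)
      = -(∫ t in (0:ℝ)..s, Real.sqrt (t - s) / (Real.sqrt (1 - t ^ 2)) ^ 3) :=
    intervalIntegral.integral_symm 0 s
  have h2 : (∫ x in (0:ℝ)..1, Real.sqrt (s * x - s) / (Real.sqrt (1 - (s * x) ^ 2)) ^ 3)
      = s⁻¹ • ∫ t in (s*0:ℝ)..(s*1), Real.sqrt (t - s) / (Real.sqrt (1 - t ^ 2)) ^ 3 :=
    intervalIntegral.integral_comp_mul_left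
      (fun t => Real.sqrt (t - s) / (Real.sqrt (1 - t ^ 2)) ^ 3) hs0
  have h3 : (∫ x in (0:ℝ)..1, Real.sqrt (s * x - s) / (Real.sqrt (1 - (s * x) ^ 2)) ^ 3)
      = Real.sqrt (-s) * Ifun s := by
    simp only [Ifun]
    rw [← intervalIntegral.integral_const_mul]
    apply intervalIntegral.integral_congr
    intro x hx
    rw [Set.uIcc_of_le zero_le_one] at hx
    have h1x : (0:ℝ) ≤ 1 - x := by linarith [hx.2]
    show Real.sqrt (s * x - s) / (Real.sqrt (1 - (s * x) ^ 2)) ^ 3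
        = Real.sqrt (-s) * (Real.sqrt (1 - x) / (Real.sqrt (1 - s ^ 2 * x ^ 2)) ^ 3)
    have h : s * x - s = (-s) * (1 - x) := by ring
    rw [h, Real.sqrt_mul hns, mul_pow s x]
    ring
  rw [h1]
  rw [mul_zero, mul_one] at h2
  have := h2.symm
  rw [h3] at this
  have h4 : (∫ t in (0:ℝ)..s, Real.sqrt (t - s) / (Real.sqrt (1 - t ^ 2)) ^ 3)
      = s * (Real.sqrt (-s) * Ifun s) := by
    rw [← this, smul_eq_mul, ← mul_assoc, mul_inv_cancel₀ hs0, one_mul]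
  rw [h4]; ring

/-- The half-width `F(s₀) = 2∫_{s₀}^{0} √(t−s₀)/(1−t²)^{3/2} dt` is strictly
decreasing on `(−1, 0)`. -/
theorem stmt_14 :
    StrictAntiOn
      (fun s0 => 2 * ∫ t in s0..0, Real.sqrt (t - s0) / (Real.sqrt (1 - t ^ 2)) ^ 3)
      (Set.Ioo (-1 : ℝ) 0) := by
  intro a ha b hb hab
  simp only
  rw [key a ha, key b hb]
  have hIb_pos : 0 < Ifun b := by
    apply intervalIntegral.intervalIntegral_pos_of_pos_on (Ifun_integrable hb) _ zero_lt_one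
    intro x hx
    have hb2 : b ^ 2 < 1 := by nlinarith [hb.1, hb.2]
    have hx2 : x ^ 2 < 1 := by nlinarith [hx.1, hx.2]
    have hden : 0 < 1 - b ^ 2 * x ^ 2 := by nlinarith [sq_nonneg b, sq_nonneg x]
    have h1x : 0 < 1 - x := by linarith [hx.2]
    positivity
  have hIab : Ifun b ≤ Ifun a := by
    apply intervalIntegral.integral_mono_on zero_le_one (Ifun_integrable hb) (Ifun_integrable ha)
    intro x hx
    have ha2 : a ^ 2 < 1 := by nlinarith [ha.1, ha.2]
    have hx2 : x ^ 2 ≤ 1 := by nlinarith [hx.1, hx.2]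
    have hdena : 0 < 1 - a ^ 2 * x ^ 2 := by nlinarith [sq_nonneg a, sq_nonneg x]
    have hba : b ^ 2 ≤ a ^ 2 := by nlinarith [hb.2]
    have hdenb : 1 - a ^ 2 * x ^ 2 ≤ 1 - b ^ 2 * x ^ 2 := by nlinarith [sq_nonneg x, mul_nonneg (by linarith : (0:ℝ) ≤ a ^ 2 - b ^ 2) (sq_nonneg x)]
    gcongr
  have hposb : 0 < (-b) * Real.sqrt (-b) := by
    have : (0:ℝ) < -b := by linarith [hb.2]
    positivity
  have hcoef : (-b) * Real.sqrt (-b) < (-a) * Real.sqrt (-a) := by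
    have h1 : (0:ℝ) < -b := by linarith [hb.2]
    have h2 : -b < -a := by linarith
    have := Real.sqrt_lt_sqrt (le_of_lt h1) h2
    nlinarith [Real.sqrt_nonneg (-b), Real.sqrt_pos.mpr h1]
  calc 2 * ((-b) * Real.sqrt (-b) * Ifun b) < 2 * ((-a) * Real.sqrt (-a) * Ifun b) := by
        have := mul_lt_mul_of_pos_right hcoef hIb_pos
        linarith
    _ ≤ 2 * ((-a) * Real.sqrt (-a) * Ifun a) := by
        have hna : (0:ℝ) < -a := by linarith [ha.2]
        have hca : (0:ℝ) ≤ (-a) * Real.sqrt (-a) := by positivity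
        nlinarith [mul_le_mul_of_nonneg_left hIab hca]
end

section
/- Define F(s₀) := 2·∫_{s₀}^{0} √(t − s₀) / (1 − t²)^{3/2} dt for s₀ ∈ (−1, 0). Then F(s₀) → 0 as s₀ → 0⁻, and F(s₀) → +∞ as s₀ → −1⁺. -/
/-!
Near `s₀ = 0` the integrand is at most `√(-s₀) / (1 - s₀²)^{3/2}` on an interval of length `-s₀`,
so `F(s₀) = O(|s₀|^{3/2})`. Near `s₀ = -1`, on `[1 + 2s₀, 0]` we have `t - s₀ ≥ (1 + t)/2` and
`1 - t² ≤ 2(1 + t)`, so the integrand dominates `1 / (4(1 + t))`, whose integral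
`-¼ log (2(1 + s₀))` diverges.
-/

open Real Filter Set Topology

namespace CapillaryWidth

noncomputable def integrand (s t : ℝ) : ℝ := √(t - s) / √(1 - t ^ 2) ^ 3

noncomputable def width (s : ℝ) : ℝ := 2 * ∫ t in s..0, integrand s t

lemma integrand_nonneg (s t : ℝ) : 0 ≤ integrand s t := by
  unfold integrand
  positivity

lemma continuousOn_integrand (s : ℝ) : ContinuousOn (integrand s) (Ioo (-1) 1) := by
  refine ContinuousOn.div (by fun_prop) (by fun_prop) fun t ht => ?_
  have : 0 < 1 - t ^ 2 := by nlinarith [ht.1, ht.2]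
  positivity

lemma intervalIntegrable_integrand (s : ℝ) {a b : ℝ} (ha : a ∈ Ioo (-1) 1)
    (hb : b ∈ Ioo (-1) 1) : IntervalIntegrable (integrand s) MeasureTheory.volume a b :=
  ((continuousOn_integrand s).mono (ordConnected_Ioo.uIcc_subset ha hb)).intervalIntegrable

lemma width_nonneg {s : ℝ} (hs : s ≤ 0) : 0 ≤ width s :=
  mul_nonneg zero_le_two <| intervalIntegral.integral_nonneg hs fun t _ => integrand_nonneg s t

lemma integrand_le {s t : ℝ} (hs : -1 < s) (ht : t ∈ Ioc s 0) :
    integrand s t ≤ √(-s) / √(1 - s ^ 2) ^ 3 := by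
  have h_pos : 0 < 1 - s ^ 2 := by nlinarith [ht.1, ht.2]
  have h_den : 1 - s ^ 2 ≤ 1 - t ^ 2 := by nlinarith [ht.1, ht.2]
  exact div_le_div₀ (sqrt_nonneg _) (sqrt_le_sqrt (by linarith [ht.2])) (by positivity)
    (pow_le_pow_left₀ (sqrt_nonneg _) (sqrt_le_sqrt h_den) 3)

lemma width_le {s : ℝ} (hs : -1 < s) (hs0 : s ≤ 0) :
    width s ≤ 2 * (√(-s) / √(1 - s ^ 2) ^ 3 * -s) := by
  have h_norm := intervalIntegral.norm_integral_le_of_norm_le_const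
    (a := s) (b := 0) (f := integrand s) fun t ht => by
      rw [uIoc_of_le hs0] at ht
      rw [norm_of_nonneg (integrand_nonneg s t)]
      exact integrand_le hs ht
  rw [norm_eq_abs, zero_sub, abs_of_nonneg (neg_nonneg.mpr hs0)] at h_norm
  unfold width
  linarith [le_abs_self (∫ t in s..0, integrand s t)]

theorem tendsto_width_nhdsLT_zero : Tendsto width (𝓝[<] 0) (𝓝 0) := by
  have h_bound : ContinuousAt (fun s : ℝ => 2 * (√(-s) / √(1 - s ^ 2) ^ 3 * -s)) 0 := by
    fun_prop (disch := norm_num)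
  have h_lim : Tendsto (fun s : ℝ => 2 * (√(-s) / √(1 - s ^ 2) ^ 3 * -s)) (𝓝[<] 0) (𝓝 0) := by
    simpa using h_bound.tendsto.mono_left nhdsWithin_le_nhds
  have h_near : ∀ᶠ s in 𝓝[<] (0 : ℝ), s ∈ Ioo (-1) 0 :=
    Ioo_mem_nhdsLT (by norm_num)
  exact squeeze_zero' (h_near.mono fun s hs => width_nonneg hs.2.le)
    (h_near.mono fun s hs => width_le hs.1 hs.2.le) h_lim

lemma inv_four_mul_one_add_le_integrand {s t : ℝ} (hs : -1 < s) (ht : t ∈ Ico (1 + 2 * s) 1) :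
    (4 * (1 + t))⁻¹ ≤ integrand s t := by
  have hu : 0 < 1 + t := by linarith [ht.1]
  set r := √(2 * (1 + t)) with hr
  have hr_pos : 0 < r := sqrt_pos.mpr (by positivity)
  have hr_sq : r ^ 2 = 2 * (1 + t) := sq_sqrt (by positivity)
  have h_half : √((1 + t) / 2) = r / 2 := by
    rw [sqrt_eq_iff_mul_self_eq (by positivity) (by positivity)]
    nlinarith
  have h_eq : (4 * (1 + t))⁻¹ = √((1 + t) / 2) / r ^ 3 := by
    rw [h_half]
    field_simp
    nlinarith
  rw [h_eq]
  exact div_le_div₀ (sqrt_nonneg _) (sqrt_le_sqrt (by linarith [ht.1]))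
    (pow_pos (sqrt_pos.mpr (by nlinarith [ht.2])) 3)
    (pow_le_pow_left₀ (sqrt_nonneg _) (sqrt_le_sqrt (by nlinarith [ht.2])) 3)

lemma integral_inv_four_mul_one_add {a : ℝ} (ha : -1 < a) :
    ∫ t in a..0, (4 * (1 + t))⁻¹ = -log (1 + a) / 4 := by
  have h_shift : ∫ t in a..0, (1 + t)⁻¹ = ∫ u in 1 + a..1 + 0, u⁻¹ :=
    intervalIntegral.integral_comp_add_left (fun u => u⁻¹) 1
  simp only [mul_inv]
  rw [intervalIntegral.integral_const_mul, h_shift,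
    integral_inv_of_pos (by linarith) (by norm_num), add_zero, one_div, log_inv]
  ring

lemma neg_log_le_width {s : ℝ} (hs : -1 < s) (hs' : s ≤ -1 / 2) :
    -log (2 * (1 + s)) / 2 ≤ width s := by
  have ha : 1 + 2 * s ∈ Ioo (-1) 1 := ⟨by linarith, by linarith⟩
  have h_tail : ∫ t in 1 + 2 * s..0, integrand s t ≤ ∫ t in s..0, integrand s t :=
    intervalIntegral.integral_mono_interval (by linarith) (by linarith) le_rfl
      (Eventually.of_forall (integrand_nonneg s))
      (intervalIntegrable_integrand s ⟨hs, by linarith⟩ (by norm_num))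
  have h_inv : ContinuousOn (fun t : ℝ => (4 * (1 + t))⁻¹) (uIcc (1 + 2 * s) 0) := by
    refine ContinuousOn.inv₀ (by fun_prop) fun t ht => ?_
    rw [uIcc_of_le (by linarith)] at ht
    linarith [ht.1]
  have h_cmp : ∫ t in 1 + 2 * s..0, (4 * (1 + t))⁻¹ ≤ ∫ t in 1 + 2 * s..0, integrand s t :=
    intervalIntegral.integral_mono_on (by linarith) h_inv.intervalIntegrable
      (intervalIntegrable_integrand s ha (by norm_num))
      fun t ht => inv_four_mul_one_add_le_integrand hs ⟨ht.1, by linarith [ht.2]⟩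
  rw [integral_inv_four_mul_one_add ha.1, show 1 + (1 + 2 * s) = 2 * (1 + s) by ring] at h_cmp
  unfold width
  linarith

theorem tendsto_width_nhdsGT_neg_one : Tendsto width (𝓝[>] (-1)) atTop := by
  have h_arg : Tendsto (fun s : ℝ => 2 * (1 + s)) (𝓝[>] (-1)) (𝓝[>] 0) := by
    refine tendsto_nhdsWithin_of_tendsto_nhds_of_eventually_within _ ?_ ?_
    · exact ((by fun_prop : Continuous fun s : ℝ => 2 * (1 + s)).tendsto' (-1) 0
        (by norm_num)).mono_left nhdsWithin_le_nhds
    · filter_upwards [self_mem_nhdsWithin] with s hs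
      simp only [mem_Ioi] at hs ⊢
      linarith
  have h_lower : Tendsto (fun s : ℝ => -log (2 * (1 + s)) / 2) (𝓝[>] (-1)) atTop :=
    (tendsto_neg_atBot_atTop.comp (tendsto_log_nhdsGT_zero.comp h_arg)).atTop_div_const two_pos
  refine tendsto_atTop_mono' _ ?_ h_lower
  filter_upwards [Ioo_mem_nhdsGT (show (-1 : ℝ) < -1 / 2 by norm_num)] with s hs
  exact neg_log_le_width hs.1 hs.2.le

end CapillaryWidth

open CapillaryWidth in
/-- Limiting behavior of `F(s₀) = 2∫_{s₀}^{0} √(t−s₀)/(1−t²)^{3/2} dt`: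
`F(s₀) → 0` as `s₀ → 0⁻` and `F(s₀) → +∞` as `s₀ → −1⁺`. -/
theorem stmt_15 :
    Filter.Tendsto
      (fun s0 => 2 * ∫ t in s0..0, Real.sqrt (t - s0) / (Real.sqrt (1 - t ^ 2)) ^ 3)
      (nhdsWithin 0 (Set.Iio 0)) (nhds 0) ∧
    Filter.Tendsto
      (fun s0 => 2 * ∫ t in s0..0, Real.sqrt (t - s0) / (Real.sqrt (1 - t ^ 2)) ^ 3)
      (nhdsWithin (-1) (Set.Ioi (-1))) Filter.atTop :=
  ⟨tendsto_width_nhdsLT_zero, tendsto_width_nhdsGT_neg_one⟩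
end

section
/- For s₀ ∈ (−1, 0), the function F(s₀) := 2·∫_{s₀}^{0} √(t − s₀) / (1 − t²)^{3/2} dt is differentiable with derivative F'(s₀) = −∫_{s₀}^{0} 1 / ((1 − t²)^{3/2}·√(t − s₀)) dt. -/
/-!
The substitution `t = s (1 - w²)` removes the singularity at `t = s`, since
`√(t - s) = √(-s) w`.
Writing `weight n t = (1 - t²)^(-n/2)`, it gives
`∫_s^0 √(t - s) / (1 - t²)^(3/2) dt = 2 (-s)^(3/2) J(s)` and
`∫_s^0 dt / ((1 - t²)^(3/2) √(t - s)) = 2 √(-s) K(s)` with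
`J(s) = ∫_0^1 w² weight 3 (s (1 - w²)) dw` and `K(s) = ∫_0^1 weight 3 (s (1 - w²)) dw`.
The integrand of `J` is smooth in `s`, so `J` may be differentiated under the integral sign, and
integrating `d/dw [w (1 - w²) weight 3 (s (1 - w²))]` over `[0, 1]` gives
`K = 3 J + 6 s² ∫_0^1 w² (1 - w²)² weight 5 (s (1 - w²)) dw`,
which is exactly the identity `(4 (-s)^(3/2) J)' = -2 √(-s) K`.
-/

open Real MeasureTheory Set Filter Topology

noncomputable def weight (n : ℕ) (t : ℝ) : ℝ := 1 / √(1 - t ^ 2) ^ n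

lemma weight_nonneg (n : ℕ) (t : ℝ) : 0 ≤ weight n t := by
  unfold weight; positivity

lemma weight_eq_rpow (n : ℕ) {t : ℝ} (ht : t ^ 2 ≤ 1) :
    weight n t = (1 - t ^ 2) ^ (-(n : ℝ) / 2) := by
  rw [weight, sqrt_eq_rpow, ← rpow_natCast, ← rpow_mul (by linarith), neg_div,
    rpow_neg (by linarith), one_div]
  ring_nf

lemma hasDerivAt_weight (n : ℕ) {t : ℝ} (ht : |t| < 1) :
    HasDerivAt (weight n) (n * t * weight (n + 2) t) t := by
  have ht2 : t ^ 2 < 1 := (sq_lt_one_iff_abs_lt_one t).mpr ht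
  have h := ((hasDerivAt_pow 2 t).const_sub 1).rpow_const (p := -(n : ℝ) / 2)
    (Or.inl (by linarith))
  have heq : weight n =ᶠ[𝓝 t] fun t => (1 - t ^ 2) ^ (-(n : ℝ) / 2) := by
    filter_upwards [(isOpen_lt (continuous_pow 2) continuous_const).mem_nhds ht2] with x hx
    exact weight_eq_rpow n (le_of_lt hx)
  refine (h.congr_of_eventuallyEq heq).congr_deriv ?_
  rw [weight_eq_rpow _ ht2.le,
    show -((n + 2 : ℕ) : ℝ) / 2 = -(n : ℝ) / 2 - 1 by push_cast; ring]
  simp only [Nat.cast_ofNat, Nat.add_one_sub_one, pow_one, neg_mul]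
  ring

@[fun_prop]
lemma measurable_weight (n : ℕ) : Measurable (weight n) := by
  unfold weight; fun_prop

lemma weight_le_weight (n : ℕ) {t m : ℝ} (htm : |t| ≤ m) (hm : m < 1) :
    weight n t ≤ weight n m := by
  have : t ^ 2 ≤ m ^ 2 := sq_le_sq' (abs_le.mp htm).1 (abs_le.mp htm).2
  have : 0 < 1 - m ^ 2 := by nlinarith [abs_nonneg t]
  unfold weight
  gcongr

lemma abs_mul_one_sub_sq_le (s : ℝ) {w : ℝ} (hw : w ∈ Icc 0 1) :
    |s * (1 - w ^ 2)| ≤ |s| := by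
  rw [abs_mul]
  exact mul_le_of_le_one_right (abs_nonneg s)
    (abs_le.mpr ⟨by nlinarith [hw.1, hw.2], by nlinarith [hw.1]⟩)

lemma continuousOn_weight_comp (n : ℕ) {s : ℝ} (hs : |s| < 1) :
    ContinuousOn (fun w => weight n (s * (1 - w ^ 2))) (Icc 0 1) := fun w hw =>
  ((hasDerivAt_weight n ((abs_mul_one_sub_sq_le s hw).trans_lt hs)).continuousAt.comp
    (f := fun w : ℝ => s * (1 - w ^ 2)) (by fun_prop)).continuousWithinAt

lemma integral_comp_mul_one_sub_sq {s : ℝ} (hs : s < 0) (g : ℝ → ℝ) :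
    ∫ t in s..0, g t = ∫ w in 0..1, 2 * -s * w * g (s * (1 - w ^ 2)) := by
  have himg : (fun w => s * (1 - w ^ 2)) '' Ioc 0 1 = Ioc s 0 := by
    ext t
    constructor
    · rintro ⟨w, ⟨hw0, hw1⟩, rfl⟩
      exact ⟨by nlinarith [mul_neg_of_neg_of_pos hs (pow_pos hw0 2)],
        mul_nonpos_of_nonpos_of_nonneg hs.le (by nlinarith)⟩
    · rintro ⟨hst, ht0⟩
      have hpos : 0 < (s - t) / s := div_pos_of_neg_of_neg (by linarith) hs
      refine ⟨√((s - t) / s), ⟨sqrt_pos.mpr hpos, sqrt_le_one.mpr ?_⟩, ?_⟩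
      · rw [div_le_one_of_neg hs]; linarith
      · dsimp only
        rw [sq_sqrt hpos.le, mul_sub, mul_div_cancel₀ _ hs.ne]
        ring
  rw [intervalIntegral.integral_of_le hs.le, intervalIntegral.integral_of_le zero_le_one, ← himg,
    integral_image_eq_integral_abs_deriv_smul measurableSet_Ioc (f' := fun w => -2 * s * w)]
  · refine setIntegral_congr_fun measurableSet_Ioc fun w hw => ?_
    rw [smul_eq_mul, abs_of_pos (by nlinarith [hw.1])]
    ring
  · intro w _
    exact (((hasDerivAt_pow 2 w).const_sub 1).const_mul s).hasDerivWithinAt.congr_deriv (by ring)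
  · intro u hu v hv huv
    have : u ^ 2 = v ^ 2 := by
      have := mul_left_cancel₀ hs.ne huv
      linarith
    exact (sq_eq_sq₀ hu.1.le hv.1.le).mp this

lemma integral_sqrt_sub_div_eq {s : ℝ} (hs : s < 0) :
    ∫ t in s..0, √(t - s) / √(1 - t ^ 2) ^ 3
      = 2 * (-s * √(-s)) * ∫ w in 0..1, w ^ 2 * weight 3 (s * (1 - w ^ 2)) := by
  rw [integral_comp_mul_one_sub_sq hs, ← intervalIntegral.integral_const_mul]
  refine intervalIntegral.integral_congr fun w hw => ?_
  rw [uIcc_of_le zero_le_one] at hw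
  rw [show s * (1 - w ^ 2) - s = -s * w ^ 2 by ring, sqrt_mul (by linarith), sqrt_sq hw.1, weight]
  ring

lemma integral_one_div_mul_sqrt_sub_eq {s : ℝ} (hs : s < 0) :
    ∫ t in s..0, 1 / (√(1 - t ^ 2) ^ 3 * √(t - s))
      = 2 * √(-s) * ∫ w in 0..1, weight 3 (s * (1 - w ^ 2)) := by
  rw [integral_comp_mul_one_sub_sq hs, ← intervalIntegral.integral_const_mul]
  refine intervalIntegral.integral_congr_ae (Eventually.of_forall fun w hw => ?_)
  rw [uIoc_of_le zero_le_one] at hw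
  have hsqrt : √(-s) * √(-s) = -s := mul_self_sqrt (by linarith)
  have : √(-s) ≠ 0 := (sqrt_pos.mpr (by linarith)).ne'
  have : w ≠ 0 := hw.1.ne'
  rw [show s * (1 - w ^ 2) - s = -s * w ^ 2 by ring, sqrt_mul (by linarith), sqrt_sq hw.1.le,
    weight]
  generalize √(1 - (s * (1 - w ^ 2)) ^ 2) = D
  rcases eq_or_ne D 0 with hD | hD
  · simp [hD]
  · field_simp
    linear_combination -hsqrt

lemma hasDerivAt_mul_one_sub_sq_mul_weight (n : ℕ) {s w : ℝ} (hw : w ∈ Icc 0 1)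
    (hs : |s| < 1) :
    HasDerivAt (fun w => w * (1 - w ^ 2) * weight n (s * (1 - w ^ 2)))
      (weight n (s * (1 - w ^ 2)) - 3 * (w ^ 2 * weight n (s * (1 - w ^ 2)))
        - 2 * n * s ^ 2 * (w ^ 2 * (1 - w ^ 2) ^ 2 * weight (n + 2) (s * (1 - w ^ 2)))) w := by
  have hinner : HasDerivAt (fun w => s * (1 - w ^ 2)) (s * -(2 * w)) w := by
    simpa using ((hasDerivAt_pow 2 w).const_sub 1).const_mul s
  have hcomp := (hasDerivAt_weight n ((abs_mul_one_sub_sq_le s hw).trans_lt hs)).comp w hinner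
  have hpoly : HasDerivAt (fun w => w * (1 - w ^ 2)) (1 - 3 * w ^ 2) w :=
    ((hasDerivAt_id' (x := w)).mul ((hasDerivAt_pow 2 w).const_sub 1)).congr_deriv (by ring)
  exact (hpoly.mul hcomp).congr_deriv (by simp only [Function.comp_apply]; ring)

lemma integral_weight_eq (n : ℕ) {s : ℝ} (hs : |s| < 1) :
    ∫ w in 0..1, weight n (s * (1 - w ^ 2))
      = 3 * (∫ w in 0..1, w ^ 2 * weight n (s * (1 - w ^ 2)))
        + 2 * n * s ^ 2 *
          ∫ w in 0..1, w ^ 2 * (1 - w ^ 2) ^ 2 * weight (n + 2) (s * (1 - w ^ 2)) := by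
  have hint {f : ℝ → ℝ} (hf : ContinuousOn f (Icc 0 1)) : IntervalIntegrable f volume 0 1 :=
    hf.intervalIntegrable_of_Icc zero_le_one
  have hK : IntervalIntegrable (fun w => weight n (s * (1 - w ^ 2))) volume 0 1 :=
    hint (continuousOn_weight_comp n hs)
  have hJ : IntervalIntegrable (fun w => w ^ 2 * weight n (s * (1 - w ^ 2))) volume 0 1 :=
    hint ((continuous_pow 2).continuousOn.mul (continuousOn_weight_comp n hs))
  have hL : IntervalIntegrable
      (fun w => w ^ 2 * (1 - w ^ 2) ^ 2 * weight (n + 2) (s * (1 - w ^ 2))) volume 0 1 :=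
    hint ((by fun_prop : Continuous fun w : ℝ => w ^ 2 * (1 - w ^ 2) ^ 2).continuousOn.mul
      (continuousOn_weight_comp (n + 2) hs))
  have hftc := intervalIntegral.integral_eq_sub_of_hasDerivAt
    (fun w hw => hasDerivAt_mul_one_sub_sq_mul_weight n
      (by rwa [uIcc_of_le zero_le_one] at hw) hs)
    ((hK.sub (hJ.const_mul 3)).sub (hL.const_mul _))
  rw [intervalIntegral.integral_sub (hK.sub (hJ.const_mul 3)) (hL.const_mul _),
    intervalIntegral.integral_sub hK (hJ.const_mul 3), intervalIntegral.integral_const_mul,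
    intervalIntegral.integral_const_mul] at hftc
  linear_combination hftc

lemma hasDerivAt_sq_mul_weight_comp (n : ℕ) {w x : ℝ} (hw : w ∈ Icc 0 1) (hx : |x| < 1) :
    HasDerivAt (fun x => w ^ 2 * weight n (x * (1 - w ^ 2)))
      (n * x * (w ^ 2 * (1 - w ^ 2) ^ 2 * weight (n + 2) (x * (1 - w ^ 2)))) x := by
  have hinner : HasDerivAt (fun x => x * (1 - w ^ 2)) (1 - w ^ 2) x :=
    ((hasDerivAt_id' (x := x)).mul_const (1 - w ^ 2)).congr_deriv (one_mul _)
  have hcomp := (hasDerivAt_weight n ((abs_mul_one_sub_sq_le x hw).trans_lt hx)).comp x hinner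
  exact (hcomp.const_mul (w ^ 2)).congr_deriv (by ring)

lemma hasDerivAt_integral_sq_mul_weight (n : ℕ) {s : ℝ} (hs : |s| < 1) :
    HasDerivAt (fun x => ∫ w in 0..1, w ^ 2 * weight n (x * (1 - w ^ 2)))
      (∫ w in 0..1, n * s * (w ^ 2 * (1 - w ^ 2) ^ 2 * weight (n + 2) (s * (1 - w ^ 2)))) s := by
  set m := (1 + |s|) / 2
  have hm : m < 1 := by simp only [m]; linarith
  have hball : ∀ x ∈ Metric.ball s ((1 - |s|) / 2), |x| ≤ m := fun x hx => by
    have := abs_sub_abs_le_abs_sub x s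
    rw [Metric.mem_ball, Real.dist_eq] at hx
    simp only [m]; linarith
  have hIoc {w : ℝ} (hw : w ∈ uIoc 0 1) : w ∈ Icc 0 1 := by
    rw [uIoc_of_le zero_le_one] at hw; exact Ioc_subset_Icc_self hw
  refine (intervalIntegral.hasDerivAt_integral_of_dominated_loc_of_deriv_le
    (bound := fun _ => n * weight (n + 2) m) (Metric.ball_mem_nhds s (by linarith))
    (Eventually.of_forall fun x => (Measurable.aestronglyMeasurable (by fun_prop)))
    (((continuous_pow 2).continuousOn.mul
      (continuousOn_weight_comp n hs)).intervalIntegrable_of_Icc zero_le_one)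
    (Measurable.aestronglyMeasurable (by fun_prop)) (Eventually.of_forall fun w hw x hx => ?_)
    intervalIntegrable_const
    (Eventually.of_forall fun w hw x hx =>
      hasDerivAt_sq_mul_weight_comp n (hIoc hw) ((hball x hx).trans_lt hm))).2
  have hw := hIoc hw
  have hx1 : |x| ≤ 1 := (hball x hx).trans hm.le
  have hP : w ^ 2 * (1 - w ^ 2) ^ 2 ≤ 1 := by
    have : 0 ≤ 1 - w ^ 2 := by nlinarith [hw.1, hw.2]
    nlinarith [pow_le_one₀ hw.1 hw.2 (n := 2), pow_le_one₀ this (by nlinarith [hw.1]) (n := 2)]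
  have hW := weight_le_weight (n + 2) ((abs_mul_one_sub_sq_le x hw).trans (hball x hx)) hm
  have hPW : 0 ≤ w ^ 2 * (1 - w ^ 2) ^ 2 * weight (n + 2) (x * (1 - w ^ 2)) :=
    mul_nonneg (by positivity) (weight_nonneg _ _)
  calc _ = (n : ℝ) * |x| * (w ^ 2 * (1 - w ^ 2) ^ 2 * weight (n + 2) (x * (1 - w ^ 2))) := by
        rw [Real.norm_eq_abs, abs_mul, abs_mul, Nat.abs_cast, abs_of_nonneg hPW]
    _ ≤ n * 1 * (1 * weight (n + 2) m) := by
        gcongr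
        exact weight_nonneg _ _
    _ = n * weight (n + 2) m := by ring

lemma hasDerivAt_neg_mul_sqrt_neg {s : ℝ} (hs : s < 0) :
    HasDerivAt (fun s => -s * √(-s)) (-(3 / 2) * √(-s)) s := by
  have hneg := (hasDerivAt_id' (x := s)).neg
  have hsqrt := (hasDerivAt_sqrt (neg_ne_zero.mpr hs.ne)).comp s hneg
  have hpos : 0 < √(-s) := sqrt_pos.mpr (neg_pos.mpr hs)
  refine (hneg.mul hsqrt).congr_deriv ?_
  simp only [Function.comp_apply, Pi.neg_apply]
  field_simp
  linear_combination mul_self_sqrt (neg_nonneg.mpr hs.le)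

/-- Formula (17): differentiating the integrated-by-parts form (16),
`F(s₀) = 2∫_{s₀}^{0} √(t−s₀)/(1−t²)^{3/2} dt` has derivative
`F'(s₀) = −∫_{s₀}^{0} dt/((1−t²)^{3/2}·√(t−s₀))` for `s₀ ∈ (−1, 0)`. -/
theorem stmt_16 (s0 : ℝ) (hs0 : s0 ∈ Set.Ioo (-1 : ℝ) 0) :
    HasDerivAt
      (fun s => 2 * ∫ t in s..0, Real.sqrt (t - s) / (Real.sqrt (1 - t ^ 2)) ^ 3)
      (-∫ t in s0..0, 1 / ((Real.sqrt (1 - t ^ 2)) ^ 3 * Real.sqrt (t - s0))) s0 := by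
  obtain ⟨hs1, hs0⟩ := hs0
  have hs : |s0| < 1 := abs_lt.mpr ⟨hs1, by linarith⟩
  have hF : (fun s => 2 * ∫ t in s..0, √(t - s) / √(1 - t ^ 2) ^ 3) =ᶠ[𝓝 s0]
      fun s => 4 * (-s * √(-s)) * ∫ w in 0..1, w ^ 2 * weight 3 (s * (1 - w ^ 2)) := by
    filter_upwards [Iio_mem_nhds hs0] with s hs
    rw [integral_sqrt_sub_div_eq hs]
    ring
  refine ((((hasDerivAt_neg_mul_sqrt_neg hs0).const_mul 4).mul
    (hasDerivAt_integral_sq_mul_weight 3 hs)).congr_of_eventuallyEq hF).congr_deriv ?_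
  rw [integral_one_div_mul_sqrt_sub_eq hs0, integral_weight_eq 3 hs,
    intervalIntegral.integral_const_mul]
  push_cast
  ring
end

section
/- With U₀ = √(−2s₀) for s₀ ∈ (−1, 0), one has lim_{s₀ → 0⁻} √(−2s₀) · ∫_{s₀}^{0} 1 / ((1 − t²)^{3/2}·√(t − s₀)) dt = 0. -/
/-!
Near `s₀ = 0` the factor `(1 - t²)^{3/2}` is bounded below by `1/2` on `[s₀, 0]`, so the integral
is at most `2 ∫_{s₀}^0 (t - s₀)^{-1/2} dt = 4√(-s₀)`. Hence the whole expression lies between `0`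
and `4√(-2s₀)·√(-s₀) = 4√2·(-s₀)`, which tends to `0`.
-/

open Real MeasureTheory Set Filter

lemma half_le_sqrt_one_sub_sq_pow_three {t : ℝ} (ht : t ^ 2 ≤ 1 / 4) :
    1 / 2 ≤ √(1 - t ^ 2) ^ 3 := by
  set y := √(1 - t ^ 2)
  have hy0 : 0 ≤ y := sqrt_nonneg _
  have hy2 : y ^ 2 = 1 - t ^ 2 := sq_sqrt (by nlinarith)
  have hy1 : y ≤ 1 := by nlinarith [sq_nonneg t]
  -- `y ^ 3 ≥ y ^ 4 = (1 - t²)² ≥ 9/16`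
  nlinarith [mul_le_mul_of_nonneg_left hy1 (pow_nonneg hy0 3)]

lemma integral_sub_rpow_neg_half (a b : ℝ) :
    ∫ t in a..b, (t - a) ^ (-(1 / 2) : ℝ) = 2 * √(b - a) := by
  rw [intervalIntegral.integral_comp_sub_right (fun x => x ^ (-(1 / 2) : ℝ)),
    integral_rpow (Or.inl (by norm_num)), sub_self, zero_rpow (by norm_num), sqrt_eq_rpow]
  norm_num
  ring

lemma integral_one_div_mul_sqrt_sub_le {w : ℝ → ℝ} {a b c : ℝ} (hab : a ≤ b) (hc : 0 < c)
    (hw : ∀ t ∈ Ioc a b, c ≤ w t) :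
    ∫ t in a..b, 1 / (w t * √(t - a)) ≤ 2 * √(b - a) / c := by
  have hg : IntegrableOn (fun t => c⁻¹ * (t - a) ^ (-(1 / 2) : ℝ)) (Ioc a b) := by
    have := ((intervalIntegral.intervalIntegrable_rpow' (a := a - a) (b := b - a) (r := -(1 / 2))
      (by norm_num)).comp_sub_right a).const_mul c⁻¹
    simpa [intervalIntegrable_iff_integrableOn_Ioc_of_le hab] using this
  calc ∫ t in a..b, 1 / (w t * √(t - a))
      ≤ ∫ t in a..b, c⁻¹ * (t - a) ^ (-(1 / 2) : ℝ) := by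
        simp only [intervalIntegral.integral_of_le hab]
        refine integral_mono_of_nonneg ?_ hg ?_
        · filter_upwards [ae_restrict_mem measurableSet_Ioc] with t ht
          have := (hc.trans_le (hw t ht)).le
          positivity
        · filter_upwards [ae_restrict_mem measurableSet_Ioc] with t ht
          have hs : 0 < √(t - a) := sqrt_pos.2 (sub_pos.2 ht.1)
          rw [rpow_neg (sub_nonneg.2 ht.1.le), ← sqrt_eq_rpow, one_div, mul_inv]
          gcongr
          exact hw t ht
    _ = 2 * √(b - a) / c := by
        rw [intervalIntegral.integral_const_mul, integral_sub_rpow_neg_half]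
        ring

/-- The derivative `∂ξ₀/∂U₀` vanishes in the limit `U₀ → 0`: with `U₀ = √(−2s₀)`,
`√(−2s₀)·∫_{s₀}^{0} dt/((1−t²)^{3/2}·√(t−s₀)) → 0` as `s₀ → 0⁻`. -/
theorem stmt_17 :
    Filter.Tendsto
      (fun s0 => Real.sqrt (-2 * s0) *
        ∫ t in s0..0, 1 / ((Real.sqrt (1 - t ^ 2)) ^ 3 * Real.sqrt (t - s0)))
      (nhdsWithin 0 (Set.Iio 0)) (nhds 0) := by
  have hnear : Ioo (-(1 / 2) : ℝ) 0 ∈ nhdsWithin 0 (Iio 0) := Ioo_mem_nhdsLT (by norm_num)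
  have hbound : Tendsto (fun s0 : ℝ => √(-2 * s0) * (4 * √(0 - s0)))
      (nhdsWithin 0 (Iio 0)) (nhds 0) := by
    have hcont : Continuous fun s0 : ℝ => √(-2 * s0) * (4 * √(0 - s0)) := by fun_prop
    simpa using (hcont.tendsto 0).mono_left nhdsWithin_le_nhds
  refine tendsto_of_tendsto_of_tendsto_of_le_of_le' tendsto_const_nhds hbound ?_ ?_
  · filter_upwards [hnear] with s0 hs0
    exact mul_nonneg (sqrt_nonneg _)
      (intervalIntegral.integral_nonneg hs0.2.le fun t _ => by positivity)
  · filter_upwards [hnear] with s0 hs0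
    gcongr
    calc _ ≤ 2 * √(0 - s0) / (1 / 2) :=
          integral_one_div_mul_sqrt_sub_le hs0.2.le (by norm_num) fun t ht =>
            half_le_sqrt_one_sub_sq_pow_three (by nlinarith [hs0.1, ht.1, ht.2])
      _ = 4 * √(0 - s0) := by ring
end
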